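/- arXiv:gr-qc/0505146 — 2 statements merged into one kernel-verified Lean document; each statement's English description precedes it below -/
import Mathlib

section
/- With τ = f τ_0 as above, the identity D_μ X^μ = div_τ X holds for all vector fields X if and only if T_μ + V_μ = ∂_μ ln f, i.e., the 1-form t + v is exact with potential ln f. -/
open scoped BigOperators

/-- Partial derivative `∂_μ f` at `x` (coordinate direction `μ`). -/
noncomputable def pd {n : ℕ} (μ : Fin n) (f : (Fin n → ℝ) → ℝ) (x : Fin n → ℝ) : ℝ :=
  fderiv ℝ f x (Pi.single μ 1)

/-- Covariant derivative of the metric, `D_μ g_{νκ}`. -/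
noncomputable def covDg {n : ℕ} (Γ : Fin n → Fin n → Fin n → (Fin n → ℝ) → ℝ)
    (g : Fin n → Fin n → (Fin n → ℝ) → ℝ) (μ ν κ : Fin n) (x : Fin n → ℝ) : ℝ :=
  pd μ (g ν κ) x - (∑ σ, Γ μ ν σ x * g σ κ x) - ∑ σ, Γ μ κ σ x * g ν σ x

/-- Torsion tensor with lowered last index, `T_{μνκ} = (Γ_{μν}^σ - Γ_{νμ}^σ) g_{σκ}`. -/
noncomputable def torLow {n : ℕ} (Γ : Fin n → Fin n → Fin n → (Fin n → ℝ) → ℝ)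
    (g : Fin n → Fin n → (Fin n → ℝ) → ℝ) (μ ν κ : Fin n) (x : Fin n → ℝ) : ℝ :=
  ∑ σ, (Γ μ ν σ x - Γ ν μ σ x) * g σ κ x

/-- Contorsion tensor `K_{μνκ} = -(1/2)(T_{νκμ} + T_{μκν} - T_{μνκ})`. -/
noncomputable def conLow {n : ℕ} (Γ : Fin n → Fin n → Fin n → (Fin n → ℝ) → ℝ)
    (g : Fin n → Fin n → (Fin n → ℝ) → ℝ) (μ ν κ : Fin n) (x : Fin n → ℝ) : ℝ :=
  -(1/2) * (torLow Γ g ν κ μ x + torLow Γ g μ κ ν x - torLow Γ g μ ν κ x)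

/-- Nonmetricity tensor `V_{μνκ} = -(1/2)(D_μ g_{νκ} + D_ν g_{κμ} - D_κ g_{μν})`. -/
noncomputable def nonmetLow {n : ℕ} (Γ : Fin n → Fin n → Fin n → (Fin n → ℝ) → ℝ)
    (g : Fin n → Fin n → (Fin n → ℝ) → ℝ) (μ ν κ : Fin n) (x : Fin n → ℝ) : ℝ :=
  -(1/2) * (covDg Γ g μ ν κ x + covDg Γ g ν κ μ x - covDg Γ g κ μ ν x)

/-- Christoffel symbols `{κ over μν}` of the metric `g` (with inverse metric `ginv`). -/
noncomputable def chr {n : ℕ} (g ginv : Fin n → Fin n → (Fin n → ℝ) → ℝ)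
    (κ μ ν : Fin n) (x : Fin n → ℝ) : ℝ :=
  (1/2) * ∑ σ, ginv κ σ x * (pd μ (g ν σ) x + pd ν (g σ μ) x - pd σ (g μ ν) x)

/-- Trace of the torsion tensor, `T_ν = T_{μν}^μ`. -/
noncomputable def torTr {n : ℕ} (Γ : Fin n → Fin n → Fin n → (Fin n → ℝ) → ℝ)
    (ν : Fin n) (x : Fin n → ℝ) : ℝ :=
  ∑ μ, (Γ μ ν μ x - Γ ν μ μ x)

/-- Trace of the nonmetricity tensor, `V_ν = V_{μν}{}^μ = g^{μσ} V_{μνσ}`. -/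
noncomputable def nonmetTr {n : ℕ} (Γ : Fin n → Fin n → Fin n → (Fin n → ℝ) → ℝ)
    (g ginv : Fin n → Fin n → (Fin n → ℝ) → ℝ) (ν : Fin n) (x : Fin n → ℝ) : ℝ :=
  ∑ μ, ∑ σ, ginv μ σ x * nonmetLow Γ g μ ν σ x

/-- `√g`, the square root of the metric determinant. -/
noncomputable def sqrtg {n : ℕ} (g : Fin n → Fin n → (Fin n → ℝ) → ℝ)
    (x : Fin n → ℝ) : ℝ :=
  Real.sqrt (Matrix.det (Matrix.of fun μ ν => g μ ν x))

/-!
Testing the identity on the constant vector fields `∂_σ` shows that it holds for all `X` exactly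
when `Γ^μ_{μσ} = ∂_σ ln (f √g)`. Jacobi's formula gives `∂_σ ln √g = ½ g^{μν} ∂_σ g_{νμ}`, and
contracting the nonmetricity with the symmetric inverse metric gives
`T_σ + V_σ = Γ^μ_{μσ} - ½ g^{μν} ∂_σ g_{νμ}`; together these say `T_σ + V_σ = ∂_σ ln f`.
-/

open Finset Matrix

section Jacobi

variable {𝕜 E ι : Type*} [NontriviallyNormedField 𝕜] [NormedAddCommGroup E] [NormedSpace 𝕜 E]
  [Fintype ι] [DecidableEq ι]

theorem Matrix.hasFDerivAt_det {M : E → Matrix ι ι 𝕜} {M' : ι → ι → E →L[𝕜] 𝕜} {x : E}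
    (hM : ∀ i j, HasFDerivAt (fun y => M y i j) (M' i j) x) :
    HasFDerivAt (fun y => (M y).det) (∑ i, ∑ k, (M x).adjugate i k • M' k i) x := by
  have hLeibniz := HasFDerivAt.fun_sum fun σ (_ : σ ∈ univ) =>
    (HasFDerivAt.finsetProd fun i (_ : i ∈ univ) => hM (σ i) i).const_mul
      ((Equiv.Perm.sign σ : ℤ) : 𝕜)
  simp only [← det_apply'] at hLeibniz
  refine hLeibniz.congr_fderiv (ContinuousLinearMap.ext fun v => ?_)
  have hcol : ∀ i, ∑ σ : Equiv.Perm ι, ((Equiv.Perm.sign σ : ℤ) : 𝕜) *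
      ((∏ j ∈ univ.erase i, M x (σ j) j) * M' (σ i) i v) = ∑ k, (M x).adjugate i k * M' k i v := by
    intro i
    rw [show ∑ k, (M x).adjugate i k * M' k i v = ((M x).adjugate *ᵥ fun k => M' k i v) i from rfl,
      ← cramer_eq_adjugate_mulVec, cramer_apply, det_apply']
    refine sum_congr rfl fun σ _ => congrArg _ ?_
    rw [← mul_prod_erase _ _ (mem_univ i), updateCol_self, mul_comm]
    refine congrArg _ (prod_congr rfl fun j hj => ?_)
    rw [updateCol_ne (ne_of_mem_erase hj)]
  simp only [FunLike.coe_sum, Finset.sum_apply, FunLike.coe_smul, Pi.smul_apply, smul_eq_mul,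
    mul_sum]
  rw [sum_comm]
  exact sum_congr rfl fun i _ => hcol i

end Jacobi

theorem Matrix.adjugate_eq_det_smul_of_mul_eq_one {R ι : Type*} [CommRing R] [Fintype ι]
    [DecidableEq ι] {A B : Matrix ι ι R} (h : B * A = 1) : A.adjugate = A.det • B := by
  calc A.adjugate = A.adjugate * (A * B) := by rw [mul_eq_one_comm.mp h, Matrix.mul_one]
    _ = A.det • B := by rw [← Matrix.mul_assoc, adjugate_mul, Matrix.smul_mul, Matrix.one_mul]

section Metric

variable {n : ℕ} {g ginv : Fin n → Fin n → (Fin n → ℝ) → ℝ} {x : Fin n → ℝ}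

theorem hasFDerivAt_det_metric (hg : ∀ μ ν, DifferentiableAt ℝ (g μ ν) x)
    (hinv : (Matrix.of fun μ ν => ginv μ ν x) * (Matrix.of fun μ ν => g μ ν x) = 1) :
    HasFDerivAt (fun y => (Matrix.of fun μ ν => g μ ν y).det)
      ((Matrix.of fun μ ν => g μ ν x).det • ∑ μ, ∑ σ, ginv μ σ x • fderiv ℝ (g σ μ) x) x := by
  have h := Matrix.hasFDerivAt_det (M := fun y => Matrix.of fun μ ν => g μ ν y)
    fun μ ν => (hg μ ν).hasFDerivAt
  rw [adjugate_eq_det_smul_of_mul_eq_one hinv] at h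
  simpa only [Matrix.smul_apply, of_apply, smul_sum, smul_smul, smul_eq_mul] using h

theorem differentiableAt_sqrtg (hg : ∀ μ ν, DifferentiableAt ℝ (g μ ν) x)
    (hdet : 0 < (Matrix.of fun μ ν => g μ ν x).det) : DifferentiableAt ℝ (sqrtg g) x :=
  (Matrix.hasFDerivAt_det fun μ ν => (hg μ ν).hasFDerivAt).differentiableAt.sqrt hdet.ne'

theorem pd_sqrtg_div_sqrtg (hg : ∀ μ ν, DifferentiableAt ℝ (g μ ν) x)
    (hdet : 0 < (Matrix.of fun μ ν => g μ ν x).det)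
    (hinv : (Matrix.of fun μ ν => ginv μ ν x) * (Matrix.of fun μ ν => g μ ν x) = 1) (ν : Fin n) :
    pd ν (sqrtg g) x / sqrtg g x = (∑ μ, ∑ σ, ginv μ σ x * pd ν (g σ μ) x) / 2 := by
  have hd := ((hasFDerivAt_det_metric hg hinv).sqrt hdet.ne').fderiv
  rw [pd, show sqrtg g = fun y => √(Matrix.of fun μ ν => g μ ν y).det from rfl, hd]
  simp only [FunLike.coe_smul, FunLike.coe_sum, Pi.smul_apply, Finset.sum_apply, smul_eq_mul]
  field_simp
  rw [Real.sq_sqrt hdet.le]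
  rfl

end Metric

theorem Matrix.trace_mul_mul_of_mul_eq_one {R ι : Type*} [CommRing R] [Fintype ι]
    [DecidableEq ι] {A B : Matrix ι ι R} (h : A * B = 1) (C : Matrix ι ι R) :
    trace (B * (C * A)) = trace C := by
  rw [trace_mul_cycle', ← Matrix.mul_assoc, h, Matrix.one_mul]

section Trace

variable {n : ℕ} {Γ : Fin n → Fin n → Fin n → (Fin n → ℝ) → ℝ}
  {g ginv : Fin n → Fin n → (Fin n → ℝ) → ℝ} {x : Fin n → ℝ}

theorem covDg_comm (hsymm : ∀ μ ν, g μ ν = g ν μ) (μ ν κ : Fin n) :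
    covDg Γ g μ ν κ x = covDg Γ g μ κ ν x := by
  simp only [covDg, hsymm κ ν, hsymm _ ν, hsymm κ _]
  ring

theorem ginv_comm (hsymm : ∀ μ ν, g μ ν = g ν μ)
    (hinv : (Matrix.of fun μ ν => ginv μ ν x) * (Matrix.of fun μ ν => g μ ν x) = 1) (μ ν : Fin n) :
    ginv μ ν x = ginv ν μ x := by
  have hG : (Matrix.of fun μ ν => g μ ν x).IsSymm := by
    ext μ ν; simp [hsymm μ ν]
  have hGi := congrFun₂ (inv_eq_left_inv hinv ▸ hG.inv) ν μ
  simpa using hGi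

theorem sum_ginv_mul_covDg (hsymm : ∀ μ ν, g μ ν = g ν μ)
    (hinv : (Matrix.of fun μ ν => ginv μ ν x) * (Matrix.of fun μ ν => g μ ν x) = 1) (ν : Fin n) :
    ∑ μ, ∑ σ, ginv μ σ x * covDg Γ g ν σ μ x
      = ∑ μ, ∑ σ, ginv μ σ x * pd ν (g σ μ) x - 2 * ∑ μ, Γ ν μ μ x := by
  set G := Matrix.of fun μ ν => g μ ν x
  set Gi := Matrix.of fun μ ν => ginv μ ν x
  set C := Matrix.of fun σ l => Γ ν σ l x
  have hexpand : ∀ μ σ, covDg Γ g ν σ μ x = pd ν (g σ μ) x - (C * G) σ μ - (C * G) μ σ := by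
    intro μ σ
    simp only [covDg, mul_apply, G, C, of_apply, hsymm σ]
  have hflip : ∑ μ, ∑ σ, ginv μ σ x * (C * G) μ σ = ∑ μ, ∑ σ, ginv μ σ x * (C * G) σ μ := by
    rw [sum_comm]
    simp only [ginv_comm hsymm hinv]
  have htrace : ∑ μ, ∑ σ, ginv μ σ x * (C * G) σ μ = ∑ μ, Γ ν μ μ x :=
    trace_mul_mul_of_mul_eq_one (mul_eq_one_comm.mp hinv) C
  simp only [hexpand, mul_sub, sum_sub_distrib, hflip, htrace]
  ring

theorem torTr_add_nonmetTr (hsymm : ∀ μ ν, g μ ν = g ν μ)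
    (hinv : (Matrix.of fun μ ν => ginv μ ν x) * (Matrix.of fun μ ν => g μ ν x) = 1) (ν : Fin n) :
    torTr Γ ν x + nonmetTr Γ g ginv ν x
      = ∑ μ, Γ μ ν μ x - (∑ μ, ∑ σ, ginv μ σ x * pd ν (g σ μ) x) / 2 := by
  have hexpand : ∀ μ σ, ginv μ σ x * nonmetLow Γ g μ ν σ x = -(1 / 2) * (ginv μ σ x *
      covDg Γ g μ ν σ x + ginv μ σ x * covDg Γ g ν σ μ x - ginv μ σ x * covDg Γ g σ μ ν x) := by
    intro μ σ; rw [nonmetLow]; ring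
  have hcancel : ∑ μ, ∑ σ, ginv μ σ x * covDg Γ g σ μ ν x
      = ∑ μ, ∑ σ, ginv μ σ x * covDg Γ g μ ν σ x := by
    rw [sum_comm]
    simp only [ginv_comm hsymm hinv _ _, covDg_comm hsymm _ _ ν]
  simp only [nonmetTr, hexpand, ← mul_sum, sum_add_distrib, sum_sub_distrib, hcancel,
    sum_ginv_mul_covDg hsymm hinv, torTr]
  ring

end Trace

section Calculus

variable {n : ℕ} {a b : (Fin n → ℝ) → ℝ} {x : Fin n → ℝ}

theorem pd_mul (ha : DifferentiableAt ℝ a x) (hb : DifferentiableAt ℝ b x) (κ : Fin n) :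
    pd κ (fun y => a y * b y) x = pd κ a x * b x + a x * pd κ b x := by
  simp only [pd, fderiv_fun_mul ha hb, _root_.add_apply, _root_.smul_apply, smul_eq_mul]
  ring

theorem pd_log (ha : DifferentiableAt ℝ a x) (hx : a x ≠ 0) (κ : Fin n) :
    pd κ (fun y => Real.log (a y)) x = pd κ a x / a x := by
  simp [pd, (ha.hasFDerivAt.log hx).fderiv, div_eq_inv_mul]

theorem pd_mul_div_mul (ha : DifferentiableAt ℝ a x) (hb : DifferentiableAt ℝ b x)
    (ha0 : a x ≠ 0) (hb0 : b x ≠ 0) (κ : Fin n) :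
    pd κ (fun y => a y * b y) x / (a x * b x) = pd κ a x / a x + pd κ b x / b x := by
  rw [pd_mul ha hb]
  field_simp

theorem sum_pd_mul_div {X : Fin n → (Fin n → ℝ) → ℝ} (hX : ∀ κ, DifferentiableAt ℝ (X κ) x)
    (hb : DifferentiableAt ℝ b x) (hb0 : b x ≠ 0) :
    (∑ κ, pd κ (fun y => X κ y * b y) x) / b x
      = ∑ κ, pd κ (X κ) x + ∑ κ, pd κ b x / b x * X κ x := by
  simp only [pd_mul (hX _) hb, sum_div, ← sum_add_distrib]
  refine sum_congr rfl fun κ _ => ?_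
  field_simp

end Calculus

theorem forall_sum_mul_eq_sum_mul_iff {E ι : Type*} [NormedAddCommGroup E] [NormedSpace ℝ E]
    [Fintype ι] {a b : ι → E → ℝ} :
    (∀ X : ι → E → ℝ, (∀ κ, Differentiable ℝ (X κ)) → ∀ x,
        ∑ σ, a σ x * X σ x = ∑ σ, b σ x * X σ x) ↔ ∀ σ x, a σ x = b σ x := by
  classical
  refine ⟨fun h σ x => ?_, fun h X _ x => by simp only [h]⟩
  simpa using h (fun κ _ => if κ = σ then 1 else 0) (fun _ => differentiable_const _) x

theorem covariant_div_eq_div_iff_general {n : ℕ}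
    (Γ : Fin n → Fin n → Fin n → (Fin n → ℝ) → ℝ)
    (g ginv : Fin n → Fin n → (Fin n → ℝ) → ℝ)
    (f : (Fin n → ℝ) → ℝ)
    (hsymm : ∀ μ ν, g μ ν = g ν μ)
    (hg : ∀ μ ν, Differentiable ℝ (g μ ν))
    (hdet : ∀ y, 0 < Matrix.det (Matrix.of fun μ ν => g μ ν y))
    (hinv : ∀ μ ν x, (∑ σ, ginv μ σ x * g σ ν x) = if μ = ν then (1:ℝ) else 0)
    (hf : Differentiable ℝ f) (hfpos : ∀ y, 0 < f y) :
    (∀ X : Fin n → (Fin n → ℝ) → ℝ, (∀ κ, Differentiable ℝ (X κ)) → ∀ x,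
        ((∑ μ, pd μ (X μ) x) + ∑ μ, ∑ σ, Γ μ σ μ x * X σ x)
          = (∑ κ, pd κ (fun y => X κ y * (f y * sqrtg g y)) x) / (f x * sqrtg g x))
      ↔ ∀ μ x, torTr Γ μ x + nonmetTr Γ g ginv μ x
          = pd μ (fun y => Real.log (f y)) x := by
  have hinvM : ∀ x, (Matrix.of fun μ ν => ginv μ ν x) * (Matrix.of fun μ ν => g μ ν x) = 1 :=
    fun x => by ext μ ν; simpa [mul_apply, one_apply] using hinv μ ν x
  have hsqrtg : ∀ x, 0 < sqrtg g x := fun x => Real.sqrt_pos.mpr (hdet x)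
  have hsqrtg_diff : ∀ x, DifferentiableAt ℝ (sqrtg g) x :=
    fun x => differentiableAt_sqrtg (fun μ ν => hg μ ν x) (hdet x)
  calc _ ↔ ∀ X : Fin n → (Fin n → ℝ) → ℝ, (∀ κ, Differentiable ℝ (X κ)) → ∀ x,
        ∑ σ, (∑ μ, Γ μ σ μ x) * X σ x
          = ∑ σ, pd σ (fun y => f y * sqrtg g y) x / (f x * sqrtg g x) * X σ x := by
        refine forall₂_congr fun X hX => forall_congr' fun x => ?_
        rw [sum_pd_mul_div (fun κ => hX κ x) ((hf x).fun_mul (hsqrtg_diff x))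
          (mul_pos (hfpos x) (hsqrtg x)).ne', sum_comm, add_right_inj]
        simp only [sum_mul]
    _ ↔ ∀ σ x, ∑ μ, Γ μ σ μ x = pd σ (fun y => f y * sqrtg g y) x / (f x * sqrtg g x) :=
        forall_sum_mul_eq_sum_mul_iff
    _ ↔ _ := by
        refine forall₂_congr fun σ x => ?_
        rw [pd_mul_div_mul (hf x) (hsqrtg_diff x) (hfpos x).ne' (hsqrtg x).ne',
          pd_sqrtg_div_sqrtg (fun μ ν => hg μ ν x) (hdet x) (hinvM x),
          torTr_add_nonmetTr hsymm (hinvM x), pd_log (hf x) (hfpos x).ne', sub_eq_iff_eq_add]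

/-- `D_μ X^μ = div_τ X` holds for all vector fields `X` (with `τ = f √g dx^1∧⋯∧dx^n` and
`div_τ` defined by `£_X τ = (div_τ X) τ`) if and only if `T_μ + V_μ = ∂_μ ln f`. -/
theorem covariant_div_eq_div_iff {n : ℕ}
    (Γ : Fin n → Fin n → Fin n → (Fin n → ℝ) → ℝ)
    (g ginv : Fin n → Fin n → (Fin n → ℝ) → ℝ)
    (f : (Fin n → ℝ) → ℝ)
    (hsymm : ∀ μ ν, g μ ν = g ν μ)
    (hg : ∀ μ ν, Differentiable ℝ (g μ ν))
    (hdet : ∀ y, 0 < Matrix.det (Matrix.of fun μ ν => g μ ν y))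
    (hinv : ∀ μ ν x, (∑ σ, ginv μ σ x * g σ ν x) = if μ = ν then (1:ℝ) else 0)
    (hinv' : ∀ μ ν x, (∑ σ, g μ σ x * ginv σ ν x) = if μ = ν then (1:ℝ) else 0)
    (hf : Differentiable ℝ f) (hfpos : ∀ y, 0 < f y) :
    (∀ X : Fin n → (Fin n → ℝ) → ℝ, (∀ κ, Differentiable ℝ (X κ)) → ∀ x,
        ((∑ μ, pd μ (X μ) x) + ∑ μ, ∑ σ, Γ μ σ μ x * X σ x)
          = (∑ κ, pd κ (fun y => X κ y * (f y * sqrtg g y)) x) / (f x * sqrtg g x))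
      ↔ ∀ μ x, torTr Γ μ x + nonmetTr Γ g ginv μ x
          = pd μ (fun y => Real.log (f y)) x :=
  covariant_div_eq_div_iff_general Γ g ginv f hsymm hg hdet hinv hf hfpos
end

section
/- The Riemann curvature tensor R_{μνσ}^κ = ∂_μ Γ_{νσ}^κ - ∂_ν Γ_{μσ}^κ + Γ_{μρ}^κ Γ_{νσ}^ρ - Γ_{νρ}^κ Γ_{μσ}^ρ of an affine connection is invariant under the λ-transformation Γ_{μν}^κ → Γ_{μν}^κ + δ^κ_ν ∂_μ λ for any smooth function λ. -/
open scoped BigOperators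

/-- The λ-transformed connection `Γ_{μν}^κ + δ^κ_ν ∂_μ λ`. -/
noncomputable def lamConn {n : ℕ} (Γ : Fin n → Fin n → Fin n → (Fin n → ℝ) → ℝ)
    (lam : (Fin n → ℝ) → ℝ) (μ ν κ : Fin n) (x : Fin n → ℝ) : ℝ :=
  Γ μ ν κ x + if ν = κ then pd μ lam x else 0

/-- The Riemann curvature tensor of an affine connection,
`R_{μνσ}^κ = ∂_μ Γ_{νσ}^κ - ∂_ν Γ_{μσ}^κ + Γ_{μρ}^κ Γ_{νσ}^ρ - Γ_{νρ}^κ Γ_{μσ}^ρ`. -/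
noncomputable def riemann {n : ℕ} (Γ : Fin n → Fin n → Fin n → (Fin n → ℝ) → ℝ)
    (μ ν σ κ : Fin n) (x : Fin n → ℝ) : ℝ :=
  pd μ (Γ ν σ κ) x - pd ν (Γ μ σ κ) x
    + (∑ ρ, Γ μ ρ κ x * Γ ν σ ρ x) - ∑ ρ, Γ ν ρ κ x * Γ μ σ ρ x

/-! The shift `δ^κ_ν ∂_μ λ` adds to the quadratic part of `R_{μνσ}^κ` only terms symmetric in
`μ, ν`, and to the derivative part only `δ^κ_σ (∂_μ ∂_ν λ - ∂_ν ∂_μ λ)`; both cancel, the latter by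
symmetry of second derivatives. -/

lemma ContDiffAt.differentiableAt_fderiv {𝕜 E F : Type*} [NontriviallyNormedField 𝕜]
    [NormedAddCommGroup E] [NormedSpace 𝕜 E] [NormedAddCommGroup F] [NormedSpace 𝕜 F]
    {f : E → F} {x : E} (hf : ContDiffAt 𝕜 2 f x) : DifferentiableAt 𝕜 (fderiv 𝕜 f) x :=
  (hf.fderiv_right (m := 1) (by norm_num)).differentiableAt one_ne_zero

section PartialDerivative

variable {n : ℕ}

lemma pd_add {f g : (Fin n → ℝ) → ℝ} {x : Fin n → ℝ} (hf : DifferentiableAt ℝ f x)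
    (hg : DifferentiableAt ℝ g x) (μ : Fin n) :
    pd μ (fun y => f y + g y) x = pd μ f x + pd μ g x := by
  rw [pd, fderiv_fun_add hf hg]; rfl

lemma pd_eq_apply_comp_fderiv (μ : Fin n) (f : (Fin n → ℝ) → ℝ) :
    pd μ f = ContinuousLinearMap.apply ℝ ℝ (Pi.single μ 1) ∘ fderiv ℝ f :=
  rfl

lemma ContDiffAt.differentiableAt_pd {f : (Fin n → ℝ) → ℝ} {x : Fin n → ℝ}
    (hf : ContDiffAt ℝ 2 f x) (μ : Fin n) : DifferentiableAt ℝ (pd μ f) x := by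
  rw [pd_eq_apply_comp_fderiv]
  exact (ContinuousLinearMap.differentiableAt _).comp x hf.differentiableAt_fderiv

lemma pd_pd_eq_fderiv_fderiv {f : (Fin n → ℝ) → ℝ} {x : Fin n → ℝ} (hf : ContDiffAt ℝ 2 f x)
    (μ ν : Fin n) : pd μ (pd ν f) x = fderiv ℝ (fderiv ℝ f) x (Pi.single μ 1) (Pi.single ν 1) := by
  rw [pd, pd_eq_apply_comp_fderiv,
    fderiv_comp x (ContinuousLinearMap.differentiableAt _) hf.differentiableAt_fderiv]
  simp

lemma pd_pd_comm {f : (Fin n → ℝ) → ℝ} {x : Fin n → ℝ} (hf : ContDiffAt ℝ 2 f x) (μ ν : Fin n) :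
    pd μ (pd ν f) x = pd ν (pd μ f) x := by
  rw [pd_pd_eq_fderiv_fderiv hf, pd_pd_eq_fderiv_fderiv hf]
  exact hf.isSymmSndFDerivAt (by simp) _ _

end PartialDerivative

lemma sum_add_ite_mul_add_ite {R : Type*} [CommSemiring R] {n : ℕ}
    (A B : Fin n → Fin n → R) (a b : R) (σ κ : Fin n) :
    ∑ ρ, (A ρ κ + if ρ = κ then a else 0) * (B σ ρ + if σ = ρ then b else 0)
      = ∑ ρ, A ρ κ * B σ ρ + (b * A σ κ + a * B σ κ + if σ = κ then a * b else 0) := by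
  simp only [mul_add, add_mul, Finset.sum_add_distrib, mul_ite, ite_mul, mul_zero, zero_mul,
    Finset.sum_ite_eq, Finset.sum_ite_eq', Finset.mem_univ, if_true]
  ring

section LambdaTransformation

variable {n : ℕ} (Γ : Fin n → Fin n → Fin n → (Fin n → ℝ) → ℝ) (lam : (Fin n → ℝ) → ℝ)

lemma pd_lamConn {x : Fin n → ℝ} {μ ν σ κ : Fin n} (hΓ : DifferentiableAt ℝ (Γ ν σ κ) x)
    (hlam : DifferentiableAt ℝ (pd ν lam) x) :
    pd μ (lamConn Γ lam ν σ κ) x = pd μ (Γ ν σ κ) x + if σ = κ then pd μ (pd ν lam) x else 0 := by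
  change pd μ (fun y => Γ ν σ κ y + if σ = κ then pd ν lam y else 0) x = _
  by_cases h : σ = κ
  · simp only [if_pos h]
    exact pd_add hΓ hlam μ
  · simp only [if_neg h, add_zero]

lemma sum_lamConn_mul_lamConn (μ ν σ κ : Fin n) (x : Fin n → ℝ) :
    ∑ ρ, lamConn Γ lam μ ρ κ x * lamConn Γ lam ν σ ρ x
      = ∑ ρ, Γ μ ρ κ x * Γ ν σ ρ x + (pd ν lam x * Γ μ σ κ x + pd μ lam x * Γ ν σ κ x
          + if σ = κ then pd μ lam x * pd ν lam x else 0) :=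
  sum_add_ite_mul_add_ite (fun ρ κ => Γ μ ρ κ x) (fun σ ρ => Γ ν σ ρ x) _ _ σ κ

end LambdaTransformation

/-- The Riemann curvature tensor is invariant under the λ-transformation
`Γ_{μν}^κ → Γ_{μν}^κ + δ^κ_ν ∂_μ λ`. -/
theorem riemann_lambda_invariant {n : ℕ}
    (Γ : Fin n → Fin n → Fin n → (Fin n → ℝ) → ℝ)
    (lam : (Fin n → ℝ) → ℝ)
    (hΓ : ∀ μ ν κ, Differentiable ℝ (Γ μ ν κ))
    (hlam : ContDiff ℝ 2 lam) :
    ∀ μ ν σ κ x, riemann (lamConn Γ lam) μ ν σ κ x = riemann Γ μ ν σ κ x := by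
  intro μ ν σ κ x
  have hpd (ρ : Fin n) : DifferentiableAt ℝ (pd ρ lam) x := hlam.contDiffAt.differentiableAt_pd ρ
  simp only [riemann, pd_lamConn Γ lam (hΓ _ _ _ x) (hpd _), sum_lamConn_mul_lamConn,
    pd_pd_comm hlam.contDiffAt μ ν]
  split_ifs <;> ring
end
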